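/- Let α ∈ ℂ with α² ∉ {0, 4, 100/9}, and let f(x,y) = xy(x⁴ + αx²y² + y⁴) ∈ ℂ[x,y]. Then the set of matrices γ = [[a,b],[c,d]] ∈ SL(2,ℂ) for which there exists c₀ ∈ ℂ, c₀ ≠ 0, with f(ax+by, cx+dy) = c₀·f(x,y) has exactly 8 elements. -/
import Mathlib

open MvPolynomial

section aux

open Complex

lemma solveAuxQ8 (α a b c d c₀ : ℂ) (hα0 : α ≠ 0) (h4 : α^2 - 4 ≠ 0) (h9 : 9*α^2 - 100 ≠ 0)
    (h1 : a*d - b*c = 1) (hc0 : c₀ ≠ 0)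
    (hH : ∀ u v : ℂ, (a*u+b*v)*(c*u+d*v)*((a*u+b*v)^4 + α*(a*u+b*v)^2*(c*u+d*v)^2 + (c*u+d*v)^4)
        = c₀*(u*v*(u^4+α*u^2*v^2+v^4))) :
    (b = 0 ∧ c = 0 ∧ d = a^3 ∧ (a = 1 ∨ a = -1 ∨ a = I ∨ a = -I)) ∨
    (a = 0 ∧ d = 0 ∧ b = -c^3 ∧ (c = 1 ∨ c = -1 ∨ c = I ∨ c = -I)) := by
  have hE6 : a*c*(a^4+α*a^2*c^2+c^4) = 0 := by linear_combination hH 1 0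
  have hE0 : b*d*(b^4+α*b^2*d^2+d^4) = 0 := by linear_combination hH 0 1
  have hQcd0 : c₀*(c*d*(c^4+α*c^2*d^2+d^4)) = 0 := by linear_combination hH d (-c)
  have hQab0 : c₀*(a*b*(a^4+α*a^2*b^2+b^4)) = 0 := by linear_combination hH (-b) a
  have hE2 : 10*b*c^2*d^3 + 3*α*b^3*c^2*d + 5*a*c*d^4 + 9*α*a*b^2*c*d^2 + 5*a*b^4*c
      + 3*α*a^2*b*d^3 + 10*a^2*b^3*d = 0 := by
    linear_combination (-49/36)*hH 0 1 + (3/4)*hH 1 1 + (3/4)*hH (-1) 1 - (3/40)*hH 2 1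
      - (3/40)*hH (-2) 1 + (1/180)*hH 3 1 + (1/180)*hH (-3) 1
  have hE4 : 5*b*c^4*d + 10*a*c^3*d^2 + 3*α*a*b^2*c^3 + 9*α*a^2*b*c^2*d + 3*α*a^3*c*d^2
      + 10*a^3*b^2*c + 5*a^4*b*d = 0 := by
    linear_combination (7/18)*hH 0 1 - (13/48)*hH 1 1 - (13/48)*hH (-1) 1 + (1/12)*hH 2 1
      + (1/12)*hH (-2) 1 - (1/144)*hH 3 1 - (1/144)*hH (-3) 1
  have hE3 : 10*b*c^3*d^2 + α*b^3*c^3 + 10*a*c^2*d^3 + 9*α*a*b^2*c^2*d + 9*α*a^2*b*c*d^2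
      + 10*a^2*b^3*c + α*a^3*d^3 + 10*a^3*b^2*d = α*c₀ := by
    linear_combination (-13/48)*hH 1 1 + (13/48)*hH (-1) 1 + (1/6)*hH 2 1 - (1/6)*hH (-2) 1
      - (1/48)*hH 3 1 + (1/48)*hH (-3) 1
  have hE5 : b*c^5 + 5*a*c^4*d + 3*α*a^2*b*c^3 + 3*α*a^3*c^2*d + 5*a^4*b*c + a^5*d = c₀ := by
    linear_combination (1/48)*hH 1 1 - (1/48)*hH (-1) 1 - (1/60)*hH 2 1 + (1/60)*hH (-2) 1
      + (1/240)*hH 3 1 - (1/240)*hH (-3) 1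
  rcases mul_eq_zero.mp hE6 with hac | hQac
  · rcases mul_eq_zero.mp hac with ha0 | hc0'
    · -- a = 0 : antidiagonal
      subst ha0
      have hcne : c ≠ 0 := by intro h; rw [h] at h1; simp at h1
      have hbne : b ≠ 0 := by intro h; rw [h] at h1; simp at h1
      have h5 : b*c^4*d = 0 := by linear_combination (1/5)*hE4
      have hd0 : d = 0 := by
        simpa [hbne, hcne, pow_eq_zero_iff] using h5
      subst hd0
      have h7 : α*(c₀+1) = 0 := by linear_combination -hE3 - α*(b^2*c^2 - b*c + 1)*h1
      have hc0m : c₀ = -1 := by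
        rcases mul_eq_zero.mp h7 with h | h
        · exact absurd h hα0
        · linear_combination h
      have hc4 : c^4 = 1 := by linear_combination -hE5 - c^4*h1 - hc0m
      have hb : b = -c^3 := by
        have h8 : c*(b+c^3) = 0 := by linear_combination -h1 + hc4
        rcases mul_eq_zero.mp h8 with h | h
        · exact absurd h hcne
        · linear_combination h
      have hroots : (c-1)*((c+1)*((c-I)*(c+I))) = 0 := by
        linear_combination hc4 - (c^2-1)*Complex.I_sq
      refine Or.inr ⟨rfl, rfl, hb, ?_⟩
      rcases mul_eq_zero.mp hroots with h | h
      · exact Or.inl (by linear_combination h)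
      rcases mul_eq_zero.mp h with h | h
      · exact Or.inr (Or.inl (by linear_combination h))
      rcases mul_eq_zero.mp h with h | h
      · exact Or.inr (Or.inr (Or.inl (by linear_combination h)))
      · exact Or.inr (Or.inr (Or.inr (by linear_combination h)))
    · -- c = 0 : diagonal
      subst hc0'
      have haneq : a ≠ 0 := by intro h; rw [h] at h1; simp at h1
      have hdneq : d ≠ 0 := by intro h; rw [h] at h1; simp at h1
      have h5 : a^4*b*d = 0 := by linear_combination (1/5)*hE4
      have hb0 : b = 0 := by
        simpa [haneq, hdneq, pow_eq_zero_iff] using h5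
      subst hb0
      have h7 : α*(c₀-1) = 0 := by linear_combination -hE3 + α*(a^2*d^2+a*d+1)*h1
      have hc01 : c₀ = 1 := by
        rcases mul_eq_zero.mp h7 with h | h
        · exact absurd h hα0
        · linear_combination h
      have ha4 : a^4 = 1 := by linear_combination hE5 - a^4*h1 + hc01
      have hd3 : d = a^3 := by
        have h8 : a*(d - a^3) = 0 := by linear_combination h1 - ha4
        rcases mul_eq_zero.mp h8 with h | h
        · exact absurd h haneq
        · linear_combination h
      have hroots : (a-1)*((a+1)*((a-I)*(a+I))) = 0 := by
        linear_combination ha4 - (a^2-1)*Complex.I_sq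
      refine Or.inl ⟨rfl, rfl, hd3, ?_⟩
      rcases mul_eq_zero.mp hroots with h | h
      · exact Or.inl (by linear_combination h)
      rcases mul_eq_zero.mp h with h | h
      · exact Or.inr (Or.inl (by linear_combination h))
      rcases mul_eq_zero.mp h with h | h
      · exact Or.inr (Or.inr (Or.inl (by linear_combination h)))
      · exact Or.inr (Or.inr (Or.inr (by linear_combination h)))
  · -- hard case : Qac = 0
    exfalso
    have ha : a ≠ 0 := by
      intro h
      subst h
      have hc4 : c^4 = 0 := by linear_combination hQac
      have hcz : c = 0 := pow_eq_zero_iff (by norm_num : (4:ℕ) ≠ 0) |>.mp hc4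
      rw [hcz] at h1; simp at h1
    have hc : c ≠ 0 := by
      intro h
      subst h
      have ha4 : a^4 = 0 := by linear_combination hQac
      have haz : a = 0 := pow_eq_zero_iff (by norm_num : (4:ℕ) ≠ 0) |>.mp ha4
      rw [haz] at h1; simp at h1
    have hb : b ≠ 0 := by
      intro h
      subst h
      have h5 : a*c*d^4 = 0 := by linear_combination (1/5)*hE2
      have hdz : d = 0 := by simpa [ha, hc, pow_eq_zero_iff] using h5
      rw [hdz] at h1; simp at h1
    have hd : d ≠ 0 := by
      intro h
      subst h
      have h5 : a*b^4*c = 0 := by linear_combination (1/5)*hE2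
      have hbz : b = 0 := by simpa [ha, hc, pow_eq_zero_iff] using h5
      rw [hbz] at h1; simp at h1
    have hQbd : b^4+α*b^2*d^2+d^4 = 0 := by
      rcases mul_eq_zero.mp hE0 with h | h
      · rcases mul_eq_zero.mp h with h' | h'
        · exact absurd h' hb
        · exact absurd h' hd
      · exact h
    have hQcd : c^4+α*c^2*d^2+d^4 = 0 := by
      rcases mul_eq_zero.mp hQcd0 with h | h
      · exact absurd h hc0
      rcases mul_eq_zero.mp h with h' | h'
      · rcases mul_eq_zero.mp h' with h'' | h''
        · exact absurd h'' hc
        · exact absurd h'' hd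
      · exact h'
    have hQab : a^4+α*a^2*b^2+b^4 = 0 := by
      rcases mul_eq_zero.mp hQab0 with h | h
      · exact absurd h hc0
      rcases mul_eq_zero.mp h with h' | h'
      · rcases mul_eq_zero.mp h' with h'' | h''
        · exact absurd h'' ha
        · exact absurd h'' hb
      · exact h'
    by_cases had : a^2 = d^2
    · have hd2 : d^2 = a^2 := had.symm
      by_cases hbc2 : c^2 = b^2
      · -- Case I
        have hI2 : 4*α*(a^3*b^2*c) + (20-3*α^2)*(a^2*b^3*d) = 0 := by
          linear_combination hE2 - (10*b*c^2*d + 5*a*c*d^2 + 9*α*a*b^2*c + 3*α*a^2*b*d + 5*a^3*c)*hd2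
            - (3*α*b^3*d + 10*a^2*b*d)*hbc2 - (3*α*b*d + 5*a*c)*hQab
        have hI4 : (20-3*α^2)*(a^3*b^2*c) + 4*α*(a^2*b^3*d) = 0 := by
          linear_combination hE4 - (10*a*c^3 + 3*α*a^3*c)*hd2
            - (5*b*c^2*d + 5*b^3*d + 3*α*a*b^2*c + 9*α*a^2*b*d + 10*a^3*c)*hbc2
            - (5*b*d + 3*α*a*c)*hQab
        have hfin : a^3*b^2*c*((α^2-4)*(9*α^2-100)) = 0 := by
          linear_combination (20-3*α^2)*hI4 - 4*α*hI2
        exact (mul_ne_zero (mul_ne_zero (mul_ne_zero (pow_ne_zero 3 ha) (pow_ne_zero 2 hb)) hc)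
          (mul_ne_zero h4 h9)) hfin
      · -- Case II
        have hD3 : (c^2-b^2)*(c^2+b^2+α*a^2) = 0 := by linear_combination hQac - hQab
        have hsum2 : c^2+b^2+α*a^2 = 0 := by
          rcases mul_eq_zero.mp hD3 with h | h
          · exact absurd (by linear_combination h) hbc2
          · exact h
        have hcore : 4*α*(a^3*b)*(b*c-a*d) = 0 := by
          linear_combination hE2 - (10*b*c^2*d + 5*a*c*d^2 + 9*α*a*b^2*c + 3*α*a^2*b*d + 5*a^3*c)*hd2
            - (3*α*b^3*d + 10*a^2*b*d)*hsum2 - (-3*α*b*d + 5*a*c)*hQab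
        have habz : α*(a^3*b) = 0 := by linear_combination (-(1/4))*hcore - (α*a^3*b)*h1
        exact (mul_ne_zero hα0 (mul_ne_zero (pow_ne_zero 3 ha) hb)) habz
    · -- Case III
      have hD1 : (a^2-d^2)*(a^2+d^2+α*c^2) = 0 := by linear_combination hQac - hQcd
      have hD2 : (a^2-d^2)*(a^2+d^2+α*b^2) = 0 := by linear_combination hQab - hQbd
      have hadne : a^2 - d^2 ≠ 0 := sub_ne_zero.mpr had
      have hs1 : a^2+d^2+α*c^2 = 0 := by
        rcases mul_eq_zero.mp hD1 with h | h
        · exact absurd h hadne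
        · exact h
      have hs2 : a^2+d^2+α*b^2 = 0 := by
        rcases mul_eq_zero.mp hD2 with h | h
        · exact absurd h hadne
        · exact h
      have hb2c2 : c^2 = b^2 := by
        have h8 : α*(c^2-b^2) = 0 := by linear_combination hs1 - hs2
        rcases mul_eq_zero.mp h8 with h | h
        · exact absurd h hα0
        · linear_combination h
      have hb4 : b^4 = a^2*d^2 := by linear_combination hQab - a^2*hs2
      have hcore : 4*α*(a*b^3)*(a*d-b*c) = 0 := by
        linear_combination hE4 - (5*b*c^2*d + 5*b^3*d + 10*a*c*d^2 + 3*α*a*b^2*c + 9*α*a^2*b*d)*hb2c2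
          - (10*a*b^2*c + 5*a^2*b*d)*hs2 - (5*b*d - 3*α*a*c)*hb4
      have habz : α*(a*b^3) = 0 := by linear_combination (1/4)*hcore - (α*a*b^3)*h1
      exact (mul_ne_zero hα0 (mul_ne_zero ha (pow_ne_zero 3 hb))) habz

end aux

/-- The binary sextic `f_α = xy(x⁴ + αx²y² + y⁴)`. -/
noncomputable def sexticQ8 (α : ℂ) : MvPolynomial (Fin 2) ℂ :=
  X 0 * X 1 * (X 0 ^ 4 + C α * X 0 ^ 2 * X 1 ^ 2 + X 1 ^ 4)

namespace Q8Aux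

@[simp] lemma coe_mk' (m : Matrix (Fin 2) (Fin 2) ℂ) (h : m.det = 1) :
    ((⟨m, h⟩ : Matrix.SpecialLinearGroup (Fin 2) ℂ) : Matrix (Fin 2) (Fin 2) ℂ) = m := rfl

noncomputable def q1 : Matrix.SpecialLinearGroup (Fin 2) ℂ :=
  ⟨!![1, 0; 0, 1], by norm_num [Matrix.det_fin_two_of]⟩
noncomputable def q2 : Matrix.SpecialLinearGroup (Fin 2) ℂ :=
  ⟨!![-1, 0; 0, -1], by norm_num [Matrix.det_fin_two_of]⟩
noncomputable def q3 : Matrix.SpecialLinearGroup (Fin 2) ℂ :=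
  ⟨!![Complex.I, 0; 0, -Complex.I], by
    norm_num [Matrix.det_fin_two_of]⟩
noncomputable def q4 : Matrix.SpecialLinearGroup (Fin 2) ℂ :=
  ⟨!![-Complex.I, 0; 0, Complex.I], by
    norm_num [Matrix.det_fin_two_of]⟩
noncomputable def q5 : Matrix.SpecialLinearGroup (Fin 2) ℂ :=
  ⟨!![0, -1; 1, 0], by norm_num [Matrix.det_fin_two_of]⟩
noncomputable def q6 : Matrix.SpecialLinearGroup (Fin 2) ℂ :=
  ⟨!![0, 1; -1, 0], by norm_num [Matrix.det_fin_two_of]⟩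
noncomputable def q7 : Matrix.SpecialLinearGroup (Fin 2) ℂ :=
  ⟨!![0, Complex.I; Complex.I, 0], by
    norm_num [Matrix.det_fin_two_of]⟩
noncomputable def q8 : Matrix.SpecialLinearGroup (Fin 2) ℂ :=
  ⟨!![0, -Complex.I; -Complex.I, 0], by
    norm_num [Matrix.det_fin_two_of]⟩

end Q8Aux

open Q8Aux in
/-- For `α² ∉ {0, 4, 100/9}`, the set of `γ ∈ SL(2,ℂ)` carrying
`f = xy(x⁴+αx²y²+y⁴)` to a nonzero multiple of itself has exactly 8 elements. -/
theorem card_stabilizer_sexticQ8 (α : ℂ) (hα : α ^ 2 ∉ ({0, 4, 100 / 9} : Set ℂ)) :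
    {γ : Matrix.SpecialLinearGroup (Fin 2) ℂ |
        ∃ c₀ : ℂ, c₀ ≠ 0 ∧
          aeval ![C ((γ : Matrix (Fin 2) (Fin 2) ℂ) 0 0) * X 0 +
                   C ((γ : Matrix (Fin 2) (Fin 2) ℂ) 0 1) * X 1,
                  C ((γ : Matrix (Fin 2) (Fin 2) ℂ) 1 0) * X 0 +
                   C ((γ : Matrix (Fin 2) (Fin 2) ℂ) 1 1) * X 1]
            (sexticQ8 α) = C c₀ * sexticQ8 α}.ncard = 8 := by
  simp only [Set.mem_insert_iff, Set.mem_singleton_iff, not_or] at hα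
  obtain ⟨hz, h4', h9'⟩ := hα
  have hα0 : α ≠ 0 := fun h => hz (by rw [h]; ring)
  have h4n : α^2 - 4 ≠ 0 := sub_ne_zero.mpr h4'
  have h9n : 9*α^2 - 100 ≠ 0 := fun h => h9' (by linear_combination (1/9 : ℂ)*h)
  have hset : {γ : Matrix.SpecialLinearGroup (Fin 2) ℂ |
        ∃ c₀ : ℂ, c₀ ≠ 0 ∧
          aeval ![C ((γ : Matrix (Fin 2) (Fin 2) ℂ) 0 0) * X 0 +
                   C ((γ : Matrix (Fin 2) (Fin 2) ℂ) 0 1) * X 1,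
                  C ((γ : Matrix (Fin 2) (Fin 2) ℂ) 1 0) * X 0 +
                   C ((γ : Matrix (Fin 2) (Fin 2) ℂ) 1 1) * X 1]
            (sexticQ8 α) = C c₀ * sexticQ8 α}
      = {q1, q2, q3, q4, q5, q6, q7, q8} := by
    ext γ
    simp only [Set.mem_setOf_eq, Set.mem_insert_iff, Set.mem_singleton_iff]
    constructor
    · rintro ⟨c₀, hc0, heq⟩
      have hdet : (γ : Matrix (Fin 2) (Fin 2) ℂ) 0 0 * (γ : Matrix (Fin 2) (Fin 2) ℂ) 1 1
          - (γ : Matrix (Fin 2) (Fin 2) ℂ) 0 1 * (γ : Matrix (Fin 2) (Fin 2) ℂ) 1 0 = 1 := by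
        have h := γ.2
        rw [Matrix.det_fin_two] at h
        exact h
      have hH : ∀ u v : ℂ,
          ((γ : Matrix (Fin 2) (Fin 2) ℂ) 0 0*u + (γ : Matrix (Fin 2) (Fin 2) ℂ) 0 1*v)
            * ((γ : Matrix (Fin 2) (Fin 2) ℂ) 1 0*u + (γ : Matrix (Fin 2) (Fin 2) ℂ) 1 1*v)
            * (((γ : Matrix (Fin 2) (Fin 2) ℂ) 0 0*u + (γ : Matrix (Fin 2) (Fin 2) ℂ) 0 1*v)^4
              + α*((γ : Matrix (Fin 2) (Fin 2) ℂ) 0 0*u + (γ : Matrix (Fin 2) (Fin 2) ℂ) 0 1*v)^2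
                *((γ : Matrix (Fin 2) (Fin 2) ℂ) 1 0*u + (γ : Matrix (Fin 2) (Fin 2) ℂ) 1 1*v)^2
              + ((γ : Matrix (Fin 2) (Fin 2) ℂ) 1 0*u + (γ : Matrix (Fin 2) (Fin 2) ℂ) 1 1*v)^4)
          = c₀*(u*v*(u^4+α*u^2*v^2+v^4)) := by
        intro u v
        have h2 := congrArg (eval ![u, v]) heq
        simp only [sexticQ8, map_mul, map_add, map_pow, aeval_X, aeval_C,
          MvPolynomial.algebraMap_eq, eval_mul, eval_add, eval_pow, eval_C, eval_X,
          Matrix.cons_val_zero, Matrix.cons_val_one, Matrix.head_cons] at h2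
        linear_combination h2
      rcases solveAuxQ8 α _ _ _ _ c₀ hα0 h4n h9n hdet hc0 hH with
        ⟨hb, hc, hd, hA⟩ | ⟨ha, hd, hb, hC⟩
      · rcases hA with h | h | h | h
        · refine Or.inl (Subtype.ext ?_)
          rw [Matrix.eta_fin_two ((γ : Matrix (Fin 2) (Fin 2) ℂ)), hb, hc, hd, h]
          norm_num [q1]
        · refine Or.inr (Or.inl (Subtype.ext ?_))
          rw [Matrix.eta_fin_two ((γ : Matrix (Fin 2) (Fin 2) ℂ)), hb, hc, hd, h]
          norm_num [q2]
        · refine Or.inr (Or.inr (Or.inl (Subtype.ext ?_)))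
          rw [Matrix.eta_fin_two ((γ : Matrix (Fin 2) (Fin 2) ℂ)), hb, hc, hd, h]
          have hI3 : Complex.I^3 = -Complex.I := by
            linear_combination Complex.I * Complex.I_sq
          rw [hI3]; rfl
        · refine Or.inr (Or.inr (Or.inr (Or.inl (Subtype.ext ?_))))
          rw [Matrix.eta_fin_two ((γ : Matrix (Fin 2) (Fin 2) ℂ)), hb, hc, hd, h]
          have hI3 : (-Complex.I)^3 = Complex.I := by
            linear_combination -Complex.I * Complex.I_sq
          rw [hI3]; rfl
      · rcases hC with h | h | h | h
        · refine Or.inr (Or.inr (Or.inr (Or.inr (Or.inl (Subtype.ext ?_)))))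
          rw [Matrix.eta_fin_two ((γ : Matrix (Fin 2) (Fin 2) ℂ)), ha, hd, hb, h]
          norm_num [q5]
        · refine Or.inr (Or.inr (Or.inr (Or.inr (Or.inr (Or.inl (Subtype.ext ?_))))))
          rw [Matrix.eta_fin_two ((γ : Matrix (Fin 2) (Fin 2) ℂ)), ha, hd, hb, h]
          norm_num [q6]
        · refine Or.inr (Or.inr (Or.inr (Or.inr (Or.inr (Or.inr (Or.inl (Subtype.ext ?_)))))))
          rw [Matrix.eta_fin_two ((γ : Matrix (Fin 2) (Fin 2) ℂ)), ha, hd, hb, h]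
          have hI3 : -Complex.I^3 = Complex.I := by
            linear_combination -Complex.I * Complex.I_sq
          rw [hI3]; rfl
        · refine Or.inr (Or.inr (Or.inr (Or.inr (Or.inr (Or.inr (Or.inr (Subtype.ext ?_)))))))
          rw [Matrix.eta_fin_two ((γ : Matrix (Fin 2) (Fin 2) ℂ)), ha, hd, hb, h]
          have hI3 : -(-Complex.I)^3 = -Complex.I := by
            linear_combination Complex.I * Complex.I_sq
          rw [hI3]; rfl
    · intro h
      rcases h with rfl | rfl | rfl | rfl | rfl | rfl | rfl | rfl
      · refine ⟨1, one_ne_zero, ?_⟩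
        apply MvPolynomial.funext
        intro x
        simp only [sexticQ8, q1, coe_mk', map_mul, map_add, map_pow, aeval_X, aeval_C,
          MvPolynomial.algebraMap_eq, eval_mul, eval_add, eval_pow, eval_C, eval_X,
          Matrix.cons_val_zero, Matrix.cons_val_one, Matrix.head_cons, Matrix.cons_val',
          Matrix.head_fin_const, Matrix.empty_val', Matrix.cons_val_fin_one, Matrix.of_apply]
        ring
      · refine ⟨1, one_ne_zero, ?_⟩
        apply MvPolynomial.funext
        intro x
        simp only [sexticQ8, q2, coe_mk', map_mul, map_add, map_pow, aeval_X, aeval_C,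
          MvPolynomial.algebraMap_eq, eval_mul, eval_add, eval_pow, eval_C, eval_X,
          Matrix.cons_val_zero, Matrix.cons_val_one, Matrix.head_cons, Matrix.cons_val',
          Matrix.head_fin_const, Matrix.empty_val', Matrix.cons_val_fin_one, Matrix.of_apply]
        ring
      · refine ⟨1, one_ne_zero, ?_⟩
        apply MvPolynomial.funext
        intro x
        simp only [sexticQ8, q3, coe_mk', map_mul, map_add, map_pow, aeval_X, aeval_C,
          MvPolynomial.algebraMap_eq, eval_mul, eval_add, eval_pow, eval_C, eval_X,
          Matrix.cons_val_zero, Matrix.cons_val_one, Matrix.head_cons, Matrix.cons_val',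
          Matrix.head_fin_const, Matrix.empty_val', Matrix.cons_val_fin_one, Matrix.of_apply]
        linear_combination (-(Complex.I^4 - Complex.I^2 + 1)
          * (x 0^5*x 1 + α*x 0^3*x 1^3 + x 0*x 1^5)) * Complex.I_sq
      · refine ⟨1, one_ne_zero, ?_⟩
        apply MvPolynomial.funext
        intro x
        simp only [sexticQ8, q4, coe_mk', map_mul, map_add, map_pow, aeval_X, aeval_C,
          MvPolynomial.algebraMap_eq, eval_mul, eval_add, eval_pow, eval_C, eval_X,
          Matrix.cons_val_zero, Matrix.cons_val_one, Matrix.head_cons, Matrix.cons_val',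
          Matrix.head_fin_const, Matrix.empty_val', Matrix.cons_val_fin_one, Matrix.of_apply]
        linear_combination (-(Complex.I^4 - Complex.I^2 + 1)
          * (x 0^5*x 1 + α*x 0^3*x 1^3 + x 0*x 1^5)) * Complex.I_sq
      · refine ⟨-1, by norm_num, ?_⟩
        apply MvPolynomial.funext
        intro x
        simp only [sexticQ8, q5, coe_mk', map_mul, map_add, map_pow, aeval_X, aeval_C,
          MvPolynomial.algebraMap_eq, eval_mul, eval_add, eval_pow, eval_C, eval_X,
          Matrix.cons_val_zero, Matrix.cons_val_one, Matrix.head_cons, Matrix.cons_val',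
          Matrix.head_fin_const, Matrix.empty_val', Matrix.cons_val_fin_one, Matrix.of_apply]
        ring
      · refine ⟨-1, by norm_num, ?_⟩
        apply MvPolynomial.funext
        intro x
        simp only [sexticQ8, q6, coe_mk', map_mul, map_add, map_pow, aeval_X, aeval_C,
          MvPolynomial.algebraMap_eq, eval_mul, eval_add, eval_pow, eval_C, eval_X,
          Matrix.cons_val_zero, Matrix.cons_val_one, Matrix.head_cons, Matrix.cons_val',
          Matrix.head_fin_const, Matrix.empty_val', Matrix.cons_val_fin_one, Matrix.of_apply]
        ring
      · refine ⟨-1, by norm_num, ?_⟩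
        apply MvPolynomial.funext
        intro x
        simp only [sexticQ8, q7, coe_mk', map_mul, map_add, map_pow, aeval_X, aeval_C,
          MvPolynomial.algebraMap_eq, eval_mul, eval_add, eval_pow, eval_C, eval_X,
          Matrix.cons_val_zero, Matrix.cons_val_one, Matrix.head_cons, Matrix.cons_val',
          Matrix.head_fin_const, Matrix.empty_val', Matrix.cons_val_fin_one, Matrix.of_apply]
        linear_combination ((Complex.I^4 - Complex.I^2 + 1)
          * (x 0^5*x 1 + α*x 0^3*x 1^3 + x 0*x 1^5)) * Complex.I_sq
      · refine ⟨-1, by norm_num, ?_⟩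
        apply MvPolynomial.funext
        intro x
        simp only [sexticQ8, q8, coe_mk', map_mul, map_add, map_pow, aeval_X, aeval_C,
          MvPolynomial.algebraMap_eq, eval_mul, eval_add, eval_pow, eval_C, eval_X,
          Matrix.cons_val_zero, Matrix.cons_val_one, Matrix.head_cons, Matrix.cons_val',
          Matrix.head_fin_const, Matrix.empty_val', Matrix.cons_val_fin_one, Matrix.of_apply]
        linear_combination ((Complex.I^4 - Complex.I^2 + 1)
          * (x 0^5*x 1 + α*x 0^3*x 1^3 + x 0*x 1^5)) * Complex.I_sq
  rw [hset]
  have hne : ∀ (m n : Matrix.SpecialLinearGroup (Fin 2) ℂ),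
      ((m : Matrix (Fin 2) (Fin 2) ℂ) 0 0, (m : Matrix (Fin 2) (Fin 2) ℂ) 0 1)
        ≠ ((n : Matrix (Fin 2) (Fin 2) ℂ) 0 0, (n : Matrix (Fin 2) (Fin 2) ℂ) 0 1) → m ≠ n := by
    intro m n h hmn
    exact h (by rw [hmn])
  have n1 : q1 ∉ ({q2, q3, q4, q5, q6, q7, q8} : Set (Matrix.SpecialLinearGroup (Fin 2) ℂ)) := by
    simp only [Set.mem_insert_iff, Set.mem_singleton_iff, not_or]
    refine ⟨?_, ?_, ?_, ?_, ?_, ?_, ?_⟩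
    all_goals {
      apply hne
      simp only [q1, q2, q3, q4, q5, q6, q7, q8, Q8Aux.coe_mk', Matrix.cons_val_zero, Matrix.cons_val_one, Matrix.head_cons, Matrix.cons_val', Matrix.head_fin_const, Matrix.empty_val', Matrix.cons_val_fin_one, Matrix.of_apply, ne_eq, Prod.mk.injEq, not_and]
      norm_num [Complex.ext_iff]
    }
  have n2 : q2 ∉ ({q3, q4, q5, q6, q7, q8} : Set (Matrix.SpecialLinearGroup (Fin 2) ℂ)) := by
    simp only [Set.mem_insert_iff, Set.mem_singleton_iff, not_or]
    refine ⟨?_, ?_, ?_, ?_, ?_, ?_⟩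
    all_goals {
      apply hne
      simp only [q1, q2, q3, q4, q5, q6, q7, q8, Q8Aux.coe_mk', Matrix.cons_val_zero, Matrix.cons_val_one, Matrix.head_cons, Matrix.cons_val', Matrix.head_fin_const, Matrix.empty_val', Matrix.cons_val_fin_one, Matrix.of_apply, ne_eq, Prod.mk.injEq, not_and]
      norm_num [Complex.ext_iff]
    }
  have n3 : q3 ∉ ({q4, q5, q6, q7, q8} : Set (Matrix.SpecialLinearGroup (Fin 2) ℂ)) := by
    simp only [Set.mem_insert_iff, Set.mem_singleton_iff, not_or]
    refine ⟨?_, ?_, ?_, ?_, ?_⟩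
    all_goals {
      apply hne
      simp only [q1, q2, q3, q4, q5, q6, q7, q8, Q8Aux.coe_mk', Matrix.cons_val_zero, Matrix.cons_val_one, Matrix.head_cons, Matrix.cons_val', Matrix.head_fin_const, Matrix.empty_val', Matrix.cons_val_fin_one, Matrix.of_apply, ne_eq, Prod.mk.injEq, not_and]
      norm_num [Complex.ext_iff]
    }
  have n4 : q4 ∉ ({q5, q6, q7, q8} : Set (Matrix.SpecialLinearGroup (Fin 2) ℂ)) := by
    simp only [Set.mem_insert_iff, Set.mem_singleton_iff, not_or]
    refine ⟨?_, ?_, ?_, ?_⟩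
    all_goals {
      apply hne
      simp only [q1, q2, q3, q4, q5, q6, q7, q8, Q8Aux.coe_mk', Matrix.cons_val_zero, Matrix.cons_val_one, Matrix.head_cons, Matrix.cons_val', Matrix.head_fin_const, Matrix.empty_val', Matrix.cons_val_fin_one, Matrix.of_apply, ne_eq, Prod.mk.injEq, not_and]
      norm_num [Complex.ext_iff]
    }
  have n5 : q5 ∉ ({q6, q7, q8} : Set (Matrix.SpecialLinearGroup (Fin 2) ℂ)) := by
    simp only [Set.mem_insert_iff, Set.mem_singleton_iff, not_or]
    refine ⟨?_, ?_, ?_⟩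
    all_goals {
      apply hne
      simp only [q1, q2, q3, q4, q5, q6, q7, q8, Q8Aux.coe_mk', Matrix.cons_val_zero, Matrix.cons_val_one, Matrix.head_cons, Matrix.cons_val', Matrix.head_fin_const, Matrix.empty_val', Matrix.cons_val_fin_one, Matrix.of_apply, ne_eq, Prod.mk.injEq, not_and]
      norm_num [Complex.ext_iff]
    }
  have n6 : q6 ∉ ({q7, q8} : Set (Matrix.SpecialLinearGroup (Fin 2) ℂ)) := by
    simp only [Set.mem_insert_iff, Set.mem_singleton_iff, not_or]
    refine ⟨?_, ?_⟩
    all_goals {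
      apply hne
      simp only [q1, q2, q3, q4, q5, q6, q7, q8, Q8Aux.coe_mk', Matrix.cons_val_zero, Matrix.cons_val_one, Matrix.head_cons, Matrix.cons_val', Matrix.head_fin_const, Matrix.empty_val', Matrix.cons_val_fin_one, Matrix.of_apply, ne_eq, Prod.mk.injEq, not_and]
      norm_num [Complex.ext_iff]
    }
  have n7 : q7 ∉ ({q8} : Set (Matrix.SpecialLinearGroup (Fin 2) ℂ)) := by
    simp only [Set.mem_insert_iff, Set.mem_singleton_iff, not_or]
    all_goals {
      apply hne
      simp only [q1, q2, q3, q4, q5, q6, q7, q8, Q8Aux.coe_mk', Matrix.cons_val_zero, Matrix.cons_val_one, Matrix.head_cons, Matrix.cons_val', Matrix.head_fin_const, Matrix.empty_val', Matrix.cons_val_fin_one, Matrix.of_apply, ne_eq, Prod.mk.injEq, not_and]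
      norm_num [Complex.ext_iff]
    }
  rw [Set.ncard_insert_of_notMem n1, Set.ncard_insert_of_notMem n2, Set.ncard_insert_of_notMem n3, Set.ncard_insert_of_notMem n4, Set.ncard_insert_of_notMem n5, Set.ncard_insert_of_notMem n6, Set.ncard_insert_of_notMem n7, Set.ncard_singleton]
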